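/- arXiv:1809.01553 — 6 statements merged into one kernel-verified Lean document; each statement's English description precedes it below -/
import Mathlib

section
/- Let N ≥ 2, let λ, b_1, …, b_N, r_1, …, r_N be real numbers, and let A_N be the (N+2)×(N+2) real matrix whose first row is (0, 1, 0, …, 0), whose second row is (−λ, 0, λb_1, λb_2, …, λb_N), and whose (i+2)-nd row (for 1 ≤ i ≤ N) has entry 1 in the first column, entry −r_i in the (i+2)-nd column, and 0 elsewhere; let A_{N−1} be the corresponding (N+1)×(N+1) matrix built from λ, b_1, …, b_{N−1}, r_1, …, r_{N−1}. Then for every z, det(A_N − z·I) = (−1)^{N+1} λ b_N ∏_{i=1}^{N−1} (r_i + z) − (r_N + z) det(A_{N−1} − z·I). -/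
/-- The `(N+2) × (N+2)` matrix `A_N` of the first-order system associated with the
integro-differential equation `u'' = -λ u + λ ∑ᵢ bᵢ ∫₀ᵗ e^{-rᵢ(t-s)} u(s) ds`:
first row `(0, 1, 0, …, 0)`, second row `(-λ, 0, λb₁, …, λb_N)`, and for `1 ≤ i ≤ N`
the `(i+2)`-nd row has `1` in the first column, `-rᵢ` in the `(i+2)`-nd column and `0` elsewhere. -/
def pronyMatrix (N : ℕ) (lam : ℝ) (b r : Fin N → ℝ) :
    Matrix (Fin (N + 2)) (Fin (N + 2)) ℝ :=
  Matrix.of fun i j =>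
    if i.val = 0 then (if j.val = 1 then 1 else 0)
    else if i.val = 1 then
      (if j.val = 0 then -lam
       else if h : 2 ≤ j.val then lam * b ⟨j.val - 2, by have := j.isLt; omega⟩ else 0)
    else
      if j.val = 0 then 1
      else if j = i then
        (if h : 2 ≤ i.val then -r ⟨i.val - 2, by have := i.isLt; omega⟩ else 0)
      else 0

/-- Recursive formula for `det (A_N - z I)`: with `N = M + 1 ≥ 2`,
`det(A_N − zI) = (−1)^{N+1} λ b_N ∏_{i=1}^{N−1} (r_i + z) − (r_N + z) det(A_{N−1} − zI)`. -/
theorem det_pronyMatrix_recursion (M : ℕ) (hM : 1 ≤ M) (lam : ℝ)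
    (b r : Fin (M + 1) → ℝ) (z : ℝ) :
    (pronyMatrix (M + 1) lam b r - z • (1 : Matrix (Fin (M + 3)) (Fin (M + 3)) ℝ)).det =
      (-1 : ℝ) ^ (M + 2) * lam * b (Fin.last M) * (∏ i : Fin M, (r i.castSucc + z)) -
        (r (Fin.last M) + z) *
          (pronyMatrix M lam (fun i => b i.castSucc) (fun i => r i.castSucc) -
            z • (1 : Matrix (Fin (M + 2)) (Fin (M + 2)) ℝ)).det := by
  set A : Matrix (Fin (M+3)) (Fin (M+3)) ℝ := pronyMatrix (M + 1) lam b r - z • 1 with hA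
  set B : Matrix (Fin (M+2)) (Fin (M+2)) ℝ :=
    A.submatrix (Fin.last (M+2)).succAbove (0 : Fin (M+3)).succAbove with hB
  set C : Matrix (Fin (M+1)) (Fin (M+1)) ℝ :=
    B.submatrix (0 : Fin (M+2)).succAbove (0 : Fin (M+2)).succAbove with hC
  set D : Matrix (Fin M) (Fin M) ℝ :=
    C.submatrix (0 : Fin (M+1)).succAbove (Fin.last M).succAbove with hD
  have hDdiag : D = Matrix.diagonal (fun i : Fin M => -(r i.castSucc + z)) := by
    ext i j
    simp only [hD, hC, hB, hA, Matrix.submatrix_apply, Fin.succAbove_last, Fin.succAbove_zero,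
      pronyMatrix, Matrix.of_apply, Matrix.sub_apply, Matrix.smul_apply, Matrix.one_apply,
      smul_eq_mul, Matrix.diagonal_apply, Fin.coe_castSucc, Fin.val_succ, Fin.ext_iff]
    rcases eq_or_ne i j with h | h
    · subst h
      have h2 : 2 ≤ (i:ℕ) + 1 + 1 := by omega
      simp only [if_neg (by omega : ¬((i:ℕ)+1+1 = 0)), if_neg (by omega : ¬((i:ℕ)+1+1 = 1)),
        if_pos rfl, dif_pos h2, if_true, eq_self_iff_true, mul_one]
      have : r ⟨(i:ℕ)+1+1-2, by have := i.isLt; omega⟩ = r i.castSucc := by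
        congr 1
      rw [this]; ring
    · have hij : (i:ℕ) ≠ (j:ℕ) := fun hh => h (Fin.ext hh)
      simp only [if_neg (by omega : ¬((i:ℕ)+1+1 = 0)), if_neg (by omega : ¬((i:ℕ)+1+1 = 1)),
        if_neg (by omega : ¬((j:ℕ)+1+1 = 0)), if_neg (by omega : ¬((j:ℕ)+1+1 = (i:ℕ)+1+1)),
        if_neg (by omega : ¬((i:ℕ)+1+1 = (j:ℕ)+1+1)), if_neg hij]
      ring
  have hDdet : D.det = (-1:ℝ)^M * ∏ i : Fin M, (r i.castSucc + z) := by
    rw [hDdiag, Matrix.det_diagonal]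
    have : ∀ i : Fin M, -(r i.castSucc + z) = (-1) * (r i.castSucc + z) := fun i => by ring
    simp_rw [this]
    rw [Finset.prod_mul_distrib, Finset.prod_const]
    simp
  have hC0 : C 0 (Fin.last M) = lam * b (Fin.last M) := by
    simp only [hC, hB, hA, Matrix.submatrix_apply, Fin.succAbove_last, Fin.succAbove_zero,
      pronyMatrix, Matrix.of_apply, Matrix.sub_apply, Matrix.smul_apply, Matrix.one_apply,
      smul_eq_mul, Fin.ext_iff, Fin.coe_castSucc, Fin.val_succ, Fin.val_last, Fin.val_zero]
    have h2 : 2 ≤ M + 1 + 1 := by omega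
    simp only [if_neg (by omega : ¬(0+1 = 0)), if_pos (by omega : (0:ℕ)+1 = 1),
      if_neg (by omega : ¬(M+1+1 = 0)), dif_pos h2, if_neg (by omega : ¬((0:ℕ)+1 = M+1+1)),
      if_neg (by omega : ¬(M+1+1 = (0:ℕ)+1)), if_true, eq_self_iff_true]
    have : b ⟨M+1+1-2, by omega⟩ = b (Fin.last M) := by congr 1
    rw [this]; ring
  have hCdet : C.det = (-1:ℝ)^M * (lam * b (Fin.last M)) * D.det := by
    rw [Matrix.det_succ_column C (Fin.last M)]
    rw [Fintype.sum_eq_single (0 : Fin (M+1))]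
    · rw [hC0, ← hD]
      simp only [Fin.val_zero, Fin.val_last, zero_add]
    · intro x hx
      have hx' : (x:ℕ) ≠ 0 := fun hh => hx (Fin.ext hh)
      have hxe : C x (Fin.last M) = 0 := by
        simp only [hC, hB, hA, Matrix.submatrix_apply, Fin.succAbove_last, Fin.succAbove_zero,
          pronyMatrix, Matrix.of_apply, Matrix.sub_apply, Matrix.smul_apply, Matrix.one_apply,
          smul_eq_mul, Fin.ext_iff, Fin.coe_castSucc, Fin.val_succ, Fin.val_last]
        have hxlt : (x:ℕ) < M + 1 := x.isLt
        simp only [if_neg (by omega : ¬((x:ℕ)+1 = 0)), if_neg (by omega : ¬((x:ℕ)+1 = 1)),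
          if_neg (by omega : ¬(M+1+1 = 0)), if_neg (by omega : ¬(M+1+1 = (x:ℕ)+1)),
          if_neg (by omega : ¬((x:ℕ)+1 = M+1+1))]
        ring
      rw [hxe]; ring
  have hB00 : B 0 0 = 1 := by
    simp only [hB, hA, Matrix.submatrix_apply, Fin.succAbove_last, Fin.succAbove_zero,
      pronyMatrix, Matrix.of_apply, Matrix.sub_apply, Matrix.smul_apply, Matrix.one_apply,
      smul_eq_mul, Fin.ext_iff, Fin.coe_castSucc, Fin.val_succ, Fin.val_zero]
    simp only [if_pos rfl, if_pos (by omega : (0:ℕ)+1 = 1),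
      if_neg (by omega : ¬((0:ℕ) = 0+1)), if_true, eq_self_iff_true]
    ring
  have hBdet : B.det = C.det := by
    rw [Matrix.det_succ_row B 0]
    rw [Fintype.sum_eq_single (0 : Fin (M+2))]
    · rw [hB00, ← hC]
      simp only [Fin.val_zero, add_zero, pow_zero]
      ring
    · intro x hx
      have hx' : (x:ℕ) ≠ 0 := fun hh => hx (Fin.ext hh)
      have hxe : B 0 x = 0 := by
        simp only [hB, hA, Matrix.submatrix_apply, Fin.succAbove_last, Fin.succAbove_zero,
          pronyMatrix, Matrix.of_apply, Matrix.sub_apply, Matrix.smul_apply, Matrix.one_apply,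
          smul_eq_mul, Fin.ext_iff, Fin.coe_castSucc, Fin.val_succ, Fin.val_zero]
        simp only [if_pos rfl, if_neg (by omega : ¬((x:ℕ)+1 = 1)),
          if_neg (by omega : ¬((0:ℕ) = (x:ℕ)+1)), if_true, eq_self_iff_true]
        ring
      rw [hxe]; ring
  have hE : A.submatrix (Fin.last (M+2)).succAbove (Fin.last (M+2)).succAbove =
      pronyMatrix M lam (fun i => b i.castSucc) (fun i => r i.castSucc) -
        z • (1 : Matrix (Fin (M + 2)) (Fin (M + 2)) ℝ) := by
    ext i j
    simp only [hA, Matrix.submatrix_apply, Fin.succAbove_last, pronyMatrix, Matrix.of_apply,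
      Matrix.sub_apply, Matrix.smul_apply, Matrix.one_apply, smul_eq_mul, Fin.coe_castSucc,
      Fin.castSucc_inj]
    congr 1
  have hAl0 : A (Fin.last (M+2)) 0 = 1 := by
    simp only [hA, pronyMatrix, Matrix.of_apply, Matrix.sub_apply, Matrix.smul_apply,
      Matrix.one_apply, smul_eq_mul, Fin.ext_iff, Fin.val_last, Fin.val_zero]
    simp only [if_neg (by omega : ¬(M+2 = 0)), if_neg (by omega : ¬(M+2 = 1)),
      if_neg (by omega : ¬(0 = M+2)), if_pos rfl, if_true, eq_self_iff_true]
    ring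
  have hAll : A (Fin.last (M+2)) (Fin.last (M+2)) = -(r (Fin.last M) + z) := by
    simp only [hA, pronyMatrix, Matrix.of_apply, Matrix.sub_apply, Matrix.smul_apply,
      Matrix.one_apply, smul_eq_mul, Fin.ext_iff, Fin.val_last]
    have h2 : 2 ≤ M + 2 := by omega
    simp only [if_neg (by omega : ¬(M+2 = 0)), if_neg (by omega : ¬(M+2 = 1)), if_pos rfl,
      dif_pos h2, if_true, eq_self_iff_true, mul_one]
    have : r ⟨M+2-2, by omega⟩ = r (Fin.last M) := by congr 1
    rw [this]; ring
  have hmain : A.det = (-1:ℝ)^(M+2+0) * A (Fin.last (M+2)) 0 * B.det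
      + (-1:ℝ)^(M+2+(M+2)) * A (Fin.last (M+2)) (Fin.last (M+2)) *
        (A.submatrix (Fin.last (M+2)).succAbove (Fin.last (M+2)).succAbove).det := by
    rw [Matrix.det_succ_row A (Fin.last (M+2))]
    rw [Fintype.sum_eq_add (0 : Fin (M+3)) (Fin.last (M+2))
      (by simp [Fin.ext_iff])]
    · simp [hB]
    · rintro x ⟨hx0, hxl⟩
      have hx0' : (x:ℕ) ≠ 0 := fun hh => hx0 (Fin.ext hh)
      have hxl' : (x:ℕ) ≠ M+2 := fun hh => hxl (Fin.ext hh)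
      have hxe : A (Fin.last (M+2)) x = 0 := by
        simp only [hA, pronyMatrix, Matrix.of_apply, Matrix.sub_apply, Matrix.smul_apply,
          Matrix.one_apply, smul_eq_mul, Fin.ext_iff, Fin.val_last]
        simp only [if_neg (by omega : ¬(M+2 = 0)), if_neg (by omega : ¬(M+2 = 1)),
          if_neg hx0', if_neg (by omega : ¬((x:ℕ) = M+2)), if_neg (by omega : ¬(M+2 = (x:ℕ)))]
        ring
      rw [hxe]; ring
  rw [hmain, hAl0, hAll, hE, hBdet, hCdet, hDdet]
  have e1 : ((-1:ℝ))^(M+2+(M+2)) = 1 := Even.neg_one_pow ⟨M+2, by ring⟩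
  have e2 : ((-1:ℝ))^M * (-1)^M = 1 := by
    rw [← pow_add]; exact Even.neg_one_pow ⟨M, by ring⟩
  rw [e1]
  have e3 : ((-1:ℝ))^(M+2+0) * 1 * ((-1:ℝ)^M * (lam * b (Fin.last M)) *
        ((-1:ℝ)^M * ∏ i : Fin M, (r i.castSucc + z)))
      = (-1:ℝ)^(M+2) * lam * b (Fin.last M) * ∏ i : Fin M, (r i.castSucc + z) := by
    rw [Nat.add_zero]
    calc ((-1:ℝ))^(M+2) * 1 * ((-1:ℝ)^M * (lam * b (Fin.last M)) *
          ((-1:ℝ)^M * ∏ i : Fin M, (r i.castSucc + z)))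
        = ((-1:ℝ)^M * (-1)^M) * ((-1:ℝ)^(M+2) * lam * b (Fin.last M) *
          ∏ i : Fin M, (r i.castSucc + z)) := by ring
      _ = _ := by rw [e2]; ring
  rw [e3]; ring
end

section
/- Let N ≥ 2, let λ, b_1, …, b_N, r_1, …, r_N be real numbers, and let A_N be the matrix described below. Then the constant term (coefficient of z⁰) of the polynomial det(A_N − z·I) equals (−1)^{N+1} λ ( Σ_{i=1}^{N} b_i ∏_{j≠i} r_j − ∏_{i=1}^N r_i ). -/
noncomputable section

def pronyEquiv (N : ℕ) : Fin 2 ⊕ Fin N ≃ Fin (N + 2) :=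
  finSumFinEquiv.trans (finCongr (by omega))

lemma pronyEquiv_inl (N : ℕ) (x : Fin 2) : ((pronyEquiv N) (Sum.inl x)).val = x.val := rfl

lemma pronyEquiv_inr (N : ℕ) (x : Fin N) : ((pronyEquiv N) (Sum.inr x)).val = 2 + x.val := rfl

lemma prony_submatrix (N : ℕ) (lam : ℝ) (b r : Fin N → ℝ) :
    (pronyMatrix N lam b r).submatrix (pronyEquiv N) (pronyEquiv N) =
      Matrix.fromBlocks !![0, 1; -lam, 0]
        (Matrix.of fun _i j => if (_i : Fin 2).val = 1 then lam * b j else 0)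
        (Matrix.of fun _i j => if (j : Fin 2).val = 0 then 1 else 0)
        (Matrix.diagonal fun i => -r i) := by
  ext x y
  rcases x with x | x <;> rcases y with y | y <;>
    simp only [Matrix.submatrix_apply, Matrix.fromBlocks_apply₁₁, Matrix.fromBlocks_apply₁₂,
      Matrix.fromBlocks_apply₂₁, Matrix.fromBlocks_apply₂₂, pronyMatrix, Matrix.of_apply,
      Matrix.diagonal_apply]
  · have hx := pronyEquiv_inl N x
    have hy := pronyEquiv_inl N y
    fin_cases x <;> fin_cases y <;> simp_all <;> norm_num
  · have hx := pronyEquiv_inl N x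
    have hy := pronyEquiv_inr N y
    fin_cases x <;> simp_all <;> omega
  · have hx := pronyEquiv_inr N x
    have hy := pronyEquiv_inl N y
    fin_cases y <;> simp_all <;>
      first
        | omega
        | (intro h; exact absurd (congrArg Fin.val h) (by omega))
  · have hx := pronyEquiv_inr N x
    have hy := pronyEquiv_inr N y
    have h0 : ¬ (2 + x.val = 0) := by omega
    have h1 : ¬ (2 + x.val = 1) := by omega
    have hy0 : ¬ (2 + y.val = 0) := by omega
    have heq : ((pronyEquiv N) (Sum.inr y) = (pronyEquiv N) (Sum.inr x)) ↔ x = y := by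
      rw [Fin.ext_iff, hx, hy, Fin.ext_iff]
      omega
    simp_all [Fin.ext_iff]
    split_ifs with h
    · rw [show x = y from Fin.ext h]
    · rfl

end

lemma det_prony_of_ne (N : ℕ) (hN : 2 ≤ N) (lam : ℝ) (b r : Fin N → ℝ) (hr : ∀ i, r i ≠ 0) :
    (pronyMatrix N lam b r).det =
      (-1 : ℝ) ^ (N + 1) * lam *
        ((∑ i : Fin N, b i * ∏ j ∈ Finset.univ.erase i, r j) - ∏ i : Fin N, r i) := by
  have hr' : ∀ i, -r i ≠ 0 := fun i => neg_ne_zero.2 (hr i)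
  letI : Invertible (Matrix.diagonal fun i : Fin N => -r i) :=
    ⟨Matrix.diagonal fun i => (-r i)⁻¹,
      by rw [Matrix.diagonal_mul_diagonal]
         simp [inv_mul_cancel₀ (hr' _)]
         funext i; exact inv_mul_cancel₀ (hr i),
      by rw [Matrix.diagonal_mul_diagonal]
         simp [mul_inv_cancel₀ (hr' _)]
         funext i; exact mul_inv_cancel₀ (hr i)⟩
  have hinv : ⅟(Matrix.diagonal fun i : Fin N => -r i) =
      Matrix.diagonal fun i => (-r i)⁻¹ := rfl
  rw [← Matrix.det_submatrix_equiv_self (pronyEquiv N), prony_submatrix,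
    Matrix.det_fromBlocks₂₂, hinv]
  rw [Matrix.det_fin_two, Matrix.det_diagonal]
  simp only [Matrix.sub_apply, Matrix.mul_apply, Matrix.mul_diagonal, Matrix.of_apply,
    Matrix.diagonal_apply, Matrix.cons_val', Matrix.cons_val_zero, Matrix.cons_val_one,
    Matrix.head_cons, Matrix.empty_val', Matrix.cons_val_fin_one, Matrix.head_fin_const,
    Fin.val_zero, Fin.val_one, if_true, if_false, one_ne_zero, zero_ne_one, mul_ite, mul_zero,
    ite_mul, zero_mul, Finset.sum_ite_eq', Finset.mem_univ, if_pos, Finset.sum_const_zero]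
  obtain ⟨M, rfl⟩ : ∃ M, N = M + 2 := ⟨N - 2, by omega⟩
  have key : ∀ k : Fin (M+2), (-r k)⁻¹ * ∏ i : Fin (M+2), -r i
      = (-1:ℝ)^(M+1) * ∏ j ∈ Finset.univ.erase k, r j := by
    intro k
    rw [← Finset.mul_prod_erase Finset.univ _ (Finset.mem_univ k),
      inv_mul_cancel_left₀ (hr' k)]
    have hc : (Finset.univ.erase k).card = M + 1 := by
      rw [Finset.card_erase_of_mem (Finset.mem_univ k), Finset.card_univ, Fintype.card_fin]
      omega
    calc ∏ j ∈ Finset.univ.erase k, -r j = ∏ j ∈ Finset.univ.erase k, (-1) * r j := by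
          simp only [neg_one_mul]
      _ = (-1:ℝ)^(M+1) * ∏ j ∈ Finset.univ.erase k, r j := by
          rw [Finset.prod_mul_distrib, Finset.prod_const, hc]
  have e1 : (∏ i : Fin (M+2), -r i) = (-1:ℝ)^(M+2) * ∏ i, r i := by
    calc (∏ i : Fin (M+2), -r i) = ∏ i : Fin (M+2), (-1) * r i := by simp only [neg_one_mul]
      _ = _ := by
        rw [Finset.prod_mul_distrib, Finset.prod_const, Finset.card_univ, Fintype.card_fin]
  rw [show ∀ P S : ℝ, P * ((0-0)*(0-0) - (1-0)*(-lam - S)) = lam * P + P * S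
      from fun P S => by ring, Finset.mul_sum]
  have h2 : ∀ x : Fin (M+2), (∏ i : Fin (M+2), -r i) * (lam * b x * (-r x)⁻¹ * 1)
      = lam * b x * ((-1:ℝ)^(M+1) * ∏ j ∈ Finset.univ.erase x, r j) := by
    intro x
    calc (∏ i : Fin (M+2), -r i) * (lam * b x * (-r x)⁻¹ * 1)
        = lam * b x * ((-r x)⁻¹ * ∏ i : Fin (M+2), -r i) := by ring
      _ = _ := by rw [key x]
  rw [Finset.sum_congr rfl fun x _ => h2 x, e1,
    show (∑ x : Fin (M+2), lam * b x * ((-1:ℝ)^(M+1) * ∏ j ∈ Finset.univ.erase x, r j))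
      = (-1:ℝ)^(M+1) * lam * ∑ x : Fin (M+2), b x * ∏ j ∈ Finset.univ.erase x, r j by
        rw [Finset.mul_sum]; exact Finset.sum_congr rfl fun x _ => by ring]
  simp only [pow_succ]
  ring

lemma det_prony (N : ℕ) (hN : 2 ≤ N) (lam : ℝ) (b r : Fin N → ℝ) :
    (pronyMatrix N lam b r).det =
      (-1 : ℝ) ^ (N + 1) * lam *
        ((∑ i : Fin N, b i * ∏ j ∈ Finset.univ.erase i, r j) - ∏ i : Fin N, r i) := by
  set F : ℝ → ℝ := fun t => (pronyMatrix N lam b (fun i => r i + t)).det with hF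
  set G : ℝ → ℝ := fun t => (-1 : ℝ) ^ (N + 1) * lam *
      ((∑ i : Fin N, b i * ∏ j ∈ Finset.univ.erase i, (r j + t)) -
        ∏ i : Fin N, (r i + t)) with hG
  have hFc : Continuous F := by
    apply Continuous.matrix_det
    apply continuous_matrix
    intro i j
    simp only [pronyMatrix, Matrix.of_apply]
    split_ifs <;> fun_prop
  have hGc : Continuous G := by
    apply Continuous.mul continuous_const
    apply Continuous.sub
    · exact continuous_finset_sum _ fun i _ =>
        Continuous.mul continuous_const (continuous_finset_prod _ fun j _ => by fun_prop)
    · exact continuous_finset_prod _ fun i _ => by fun_prop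
  have heq : ∀ᶠ t in nhdsWithin (0:ℝ) {(0:ℝ)}ᶜ, F t = G t := by
    have hev : ∀ᶠ t in nhdsWithin (0:ℝ) {(0:ℝ)}ᶜ, ∀ i, r i + t ≠ 0 := by
      rw [Filter.eventually_all]
      intro i
      rcases eq_or_ne (r i) 0 with h | h
      · filter_upwards [self_mem_nhdsWithin] with t ht
        simpa [h] using ht
      · apply eventually_nhdsWithin_of_eventually_nhds
        have : ∀ᶠ t in nhds (0:ℝ), t ≠ -r i := by
          apply IsOpen.eventually_mem isOpen_ne
          simpa using fun hh => h (by linarith)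
        filter_upwards [this] with t ht hc
        exact ht (by linarith)
    filter_upwards [hev] with t ht
    exact det_prony_of_ne N hN lam b _ ht
  have l1 : Filter.Tendsto F (nhdsWithin (0:ℝ) {(0:ℝ)}ᶜ) (nhds (F 0)) :=
    (hFc.tendsto 0).mono_left nhdsWithin_le_nhds
  have l2 : Filter.Tendsto G (nhdsWithin (0:ℝ) {(0:ℝ)}ᶜ) (nhds (G 0)) :=
    (hGc.tendsto 0).mono_left nhdsWithin_le_nhds
  have hFG : F 0 = G 0 := tendsto_nhds_unique (l1.congr' heq) l2
  simpa [hF, hG] using hFG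


/-- For `N ≥ 2`, the constant term of the polynomial `det(A_N − z·I)` equals
`(−1)^{N+1} λ (∑ᵢ bᵢ ∏_{j≠i} rⱼ − ∏ᵢ rᵢ)`. -/
theorem constant_term_det_pronyMatrix (N : ℕ) (hN : 2 ≤ N) (lam : ℝ) (b r : Fin N → ℝ) :
    (((pronyMatrix N lam b r).map Polynomial.C -
        (Polynomial.X : Polynomial ℝ) • (1 : Matrix (Fin (N + 2)) (Fin (N + 2)) (Polynomial ℝ))).det).coeff 0 =
      (-1 : ℝ) ^ (N + 1) * lam *
        ((∑ i : Fin N, b i * ∏ j ∈ Finset.univ.erase i, r j) - ∏ i : Fin N, r i) := by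
  have hmap : ((pronyMatrix N lam b r).map Polynomial.C -
      (Polynomial.X : Polynomial ℝ) • (1 : Matrix (Fin (N + 2)) (Fin (N + 2)) (Polynomial ℝ))).map
        (Polynomial.evalRingHom 0) = pronyMatrix N lam b r := by
    ext i j
    simp [Matrix.map_apply, Matrix.sub_apply, Matrix.smul_apply, Matrix.one_apply, apply_ite]
  rw [Polynomial.coeff_zero_eq_eval_zero,
    show (Polynomial.eval 0 : Polynomial ℝ → ℝ) = ⇑(Polynomial.evalRingHom 0) from rfl,
    RingHom.map_det, RingHom.mapMatrix_apply, hmap, det_prony N hN lam b r]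
end

section
/- Let N ≥ 1, let λ be a real number, and let b_1, …, b_N, r_1, …, r_N be positive real numbers satisfying Σ_{i=1}^N b_i / r_i = 1. Then 0 is an eigenvalue of the matrix A_N, i.e. det(A_N) = 0. -/
/-- For `N ≥ 1`, positive parameters `bᵢ, rᵢ` with `∑ᵢ bᵢ/rᵢ = 1`, the matrix `A_N`
has `0` as an eigenvalue, i.e. `det A_N = 0`. -/
theorem det_pronyMatrix_eq_zero (N : ℕ) (hN : 1 ≤ N) (lam : ℝ) (b r : Fin N → ℝ)
    (hb : ∀ i, 0 < b i) (hr : ∀ i, 0 < r i) (hsum : ∑ i : Fin N, b i / r i = 1) :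
    (pronyMatrix N lam b r).det = 0 := by
  rw [← Matrix.exists_mulVec_eq_zero_iff]
  refine ⟨fun j => if h : j.val = 0 then 1 else if j.val = 1 then 0 else
      1 / r ⟨j.val - 2, by have := j.isLt; omega⟩, ?_, ?_⟩
  · intro h
    have := congrFun h 0
    simp at this
  · funext i
    simp only [Matrix.mulVec, dotProduct, pronyMatrix, Matrix.of_apply]
    rw [Fin.sum_univ_succ, Fin.sum_univ_succ]
    rcases Nat.lt_or_ge i.val 2 with hi | hi
    · rcases (by omega : i.val = 0 ∨ i.val = 1) with h0 | h1
      · simp [h0, Fin.succ]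
      · have hi1 : i.val ≠ 0 := by omega
        simp only [h1, hi1, if_false, if_true, Fin.val_zero, Fin.val_succ]
        norm_num
        simp only [show ∀ n : ℕ, n + 1 + 1 - 2 = n from fun n => rfl, Fin.eta]
        have key : ∑ x : Fin N, lam * b x * (r x)⁻¹ = lam := by
          calc ∑ x : Fin N, lam * b x * (r x)⁻¹ = lam * ∑ x : Fin N, b x / r x := by
                rw [Finset.mul_sum]; exact Finset.sum_congr rfl fun x _ => by
                  rw [div_eq_mul_inv, mul_assoc]
            _ = lam := by rw [hsum, mul_one]
        linarith [key]
    · have hi0 : i.val ≠ 0 := by omega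
      have hi1 : i.val ≠ 1 := by omega
      simp only [hi0, hi1, if_false, Fin.val_zero, Fin.val_succ, Fin.succ_zero_eq_one]
      norm_num
      simp only [dif_pos hi, show ∀ n : ℕ, n + 1 + 1 - 2 = n from fun n => rfl, Fin.eta]
      have hlt : i.val - 2 < N := by have := i.isLt; omega
      have hcond : ∀ x : Fin N, (x.succ.succ = i) ↔ (x = ⟨i.val - 2, hlt⟩) := by
        intro x
        rw [Fin.ext_iff, Fin.ext_iff]
        simp only [Fin.val_succ]
        omega
      rw [Finset.sum_congr rfl fun x _ => if_congr (hcond x) rfl rfl,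
        Finset.sum_ite_eq' Finset.univ _ (fun x : Fin N => -(r ⟨i.val - 2, hlt⟩ * (r x)⁻¹))]
      simp [mul_inv_cancel₀ (hr ⟨i.val - 2, hlt⟩).ne']
end

section
/- Let E_1, E_2, η_1, η_2 > 0, define the Findley parameters p_1, p_2, q_1, q_2, A, r_1, r_2 as below, set c² = q_2/p_2 and define b_1 = r_1(q_1 − q_2 r_1)/(c² A) and b_2 = −r_2(q_1 − q_2 r_2)/(c² A). Then b_1 > 0 and b_2 > 0. -/
set_option maxHeartbeats 1000000


/-- For the Burgers model with `c² = q₂/p₂`, the memory-kernel coefficients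
`b₁ = r₁(q₁ − q₂r₁)/(c²A)` and `b₂ = −r₂(q₁ − q₂r₂)/(c²A)` are positive. -/
theorem burgers_b_pos (E1 E2 eta1 eta2 : ℝ)
    (hE1 : 0 < E1) (hE2 : 0 < E2) (heta1 : 0 < eta1) (heta2 : 0 < eta2)
    (p1 p2 q1 q2 A r1 r2 : ℝ)
    (hp1 : p1 = eta1 / E1 + eta1 / E2 + eta2 / E2)
    (hp2 : p2 = eta1 * eta2 / (E1 * E2))
    (hq1 : q1 = eta1) (hq2 : q2 = eta1 * eta2 / E2)
    (hA : A = Real.sqrt (p1 ^ 2 - 4 * p2))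
    (hr1 : r1 = (p1 - A) / (2 * p2)) (hr2 : r2 = (p1 + A) / (2 * p2))
    (c2 b1 b2 : ℝ) (hc2 : c2 = q2 / p2)
    (hb1 : b1 = r1 * (q1 - q2 * r1) / (c2 * A))
    (hb2 : b2 = -(r2 * (q1 - q2 * r2)) / (c2 * A)) :
    0 < b1 ∧ 0 < b2 := by
  set a := eta1 / E1 with ha_def
  set b := eta1 / E2 with hb_def
  set c := eta2 / E2 with hc_def
  have ha : 0 < a := div_pos heta1 hE1
  have hb : 0 < b := div_pos heta1 hE2
  have hc : 0 < c := div_pos heta2 hE2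
  have hp1' : p1 = a + b + c := hp1
  have hp2' : p2 = a * c := by
    rw [hp2, ha_def, hc_def]; field_simp
  have hq2' : q2 = E1 * (a * c) := by
    rw [hq2, ha_def, hc_def]; field_simp
  have hq1' : q1 = E1 * a := by rw [hq1, ha_def]; field_simp
  have hdisc : 0 < p1 ^ 2 - 4 * p2 := by
    rw [hp1', hp2']
    nlinarith [sq_nonneg (a - c), mul_pos ha hb, mul_pos hb hc, sq_nonneg b]
  have hApos : 0 < A := by rw [hA]; exact Real.sqrt_pos.mpr hdisc
  have hA2 : A ^ 2 = p1 ^ 2 - 4 * p2 := by rw [hA, Real.sq_sqrt hdisc.le]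
  have hp2pos : 0 < p2 := by rw [hp2']; positivity
  have hp1pos : 0 < p1 := by rw [hp1']; positivity
  have hAlt : A < p1 := by nlinarith
  have hr1pos : 0 < r1 := by
    rw [hr1]; apply div_pos (by linarith) (by linarith)
  have hr2pos : 0 < r2 := by
    rw [hr2]; apply div_pos (by linarith) (by linarith)
  have hA2' : A ^ 2 = (a + b + c) ^ 2 - 4 * (a * c) := by rw [hA2, hp1', hp2']
  have hprod1 : A ^ 2 - (b + c - a) ^ 2 = 4 * (a * b) := by
    linear_combination hA2'
  have hprod2 : A ^ 2 - (a - b - c) ^ 2 = 4 * (a * b) := by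
    linear_combination hA2'
  have key1 : 0 < A + a - b - c := by
    rcases le_or_gt (b + c) a with h | h
    · linarith
    · have hx : 0 < A + (b + c - a) := by linarith
      nlinarith [mul_pos ha hb, hprod1, hx]
  have key2 : 0 < A + b + c - a := by
    rcases le_or_gt a (b + c) with h | h
    · linarith
    · have hx : 0 < A + (a - b - c) := by linarith
      nlinarith [mul_pos ha hb, hprod2, hx]
  have hc2' : c2 = E1 := by
    rw [hc2, hq2', hp2']
    field_simp
  have hacne : (a * c : ℝ) ≠ 0 := by positivity
  have h1 : q1 - q2 * r1 = E1 * (A + a - b - c) / 2 := by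
    rw [hq1', hq2', hr1, hp1', hp2']
    field_simp
    ring
  have h2 : -(r2 * (q1 - q2 * r2)) = r2 * (E1 * (A + b + c - a) / 2) := by
    have : q1 - q2 * r2 = -(E1 * (A + b + c - a) / 2) := by
      rw [hq1', hq2', hr2, hp1', hp2']
      field_simp
      ring
    rw [this]; ring
  constructor
  · rw [hb1, h1, hc2']
    apply div_pos
    · exact mul_pos hr1pos (by positivity)
    · exact mul_pos hE1 hApos
  · rw [hb2, h2, hc2']
    apply div_pos
    · exact mul_pos hr2pos (by positivity)
    · exact mul_pos hE1 hApos
end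

section
/- Let b_1, b_2, r_1, r_2 > 0 satisfy b_1/r_1 + b_2/r_2 = 1 (so that r_1 + r_2 − b_1 − b_2 > 0). For λ > 0 consider the cubic P_λ(z) = z³ + (r_1 + r_2) z² + (λ + r_1 r_2) z + λ (r_1 + r_2 − b_1 − b_2). Then for all sufficiently large λ, P_λ has exactly one real root ρ(λ), and ρ(λ) → b_1 + b_2 − r_1 − r_2 as λ → ∞. -/
/-- For `b₁, b₂, r₁, r₂ > 0` with `b₁/r₁ + b₂/r₂ = 1`, the cubic
`P_λ(z) = z³ + (r₁+r₂)z² + (λ + r₁r₂)z + λ(r₁+r₂−b₁−b₂)` has, for all sufficiently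
large `λ`, exactly one real root `ρ(λ)`, and `ρ(λ) → b₁+b₂−r₁−r₂` as `λ → ∞`. -/
theorem burgers_cubic_real_root (b1 b2 r1 r2 : ℝ)
    (hb1 : 0 < b1) (hb2 : 0 < b2) (hr1 : 0 < r1) (hr2 : 0 < r2)
    (hsum : b1 / r1 + b2 / r2 = 1) :
    ∃ Λ : ℝ, ∃ ρ : ℝ → ℝ,
      (∀ lam : ℝ, Λ < lam → ∀ z : ℝ,
          z ^ 3 + (r1 + r2) * z ^ 2 + (lam + r1 * r2) * z +
              lam * (r1 + r2 - b1 - b2) = 0 ↔ z = ρ lam) ∧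
        Filter.Tendsto ρ Filter.atTop (nhds (b1 + b2 - r1 - r2)) := by
  classical
  have heq : b1 * r2 + b2 * r1 = r1 * r2 := by
    field_simp at hsum; linarith
  set s : ℝ := r1 + r2 with hsdef
  have hs : 0 < s := by positivity
  set c : ℝ := r1 + r2 - b1 - b2 with hcdef
  have hc : 0 < c := by
    have h1 : b1 < r1 := by nlinarith
    have h2 : b2 < r2 := by nlinarith
    rw [hcdef]; linarith
  set f : ℝ → ℝ → ℝ := fun lam z =>
    z ^ 3 + s * z ^ 2 + (lam + r1 * r2) * z + lam * c with hfdef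
  have hmono : ∀ lam : ℝ, s ^ 2 < lam → StrictMono (f lam) := by
    intro lam hlam z w hzw
    have hq : 4 * s ^ 2 < 12 * (lam + r1 * r2) := by nlinarith [mul_pos hr1 hr2]
    show z ^ 3 + s * z ^ 2 + (lam + r1 * r2) * z + lam * c <
        w ^ 3 + s * w ^ 2 + (lam + r1 * r2) * w + lam * c
    nlinarith [sq_nonneg (3 * (w + z) + 2 * s), sq_nonneg (w - z),
      mul_pos (sub_pos.mpr hzw) (sub_pos.mpr hzw)]
  set Λ : ℝ := s ^ 2 + s * (c + 1) ^ 2 + 1 with hΛdef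
  have hΛs : s ^ 2 < Λ := by nlinarith [sq_nonneg (c + 1), mul_pos hs (pow_pos (by linarith : (0:ℝ) < c + 1) 2)]
  have hΛpos : 0 < Λ := by positivity
  have hexists : ∀ lam : ℝ, Λ < lam → ∃ z, f lam z = 0 := by
    intro lam hlam
    have hlam0 : 0 < lam := lt_trans hΛpos hlam
    have h1 : f lam (-c - 1) < 0 := by
      show (-c - 1) ^ 3 + s * (-c - 1) ^ 2 + (lam + r1 * r2) * (-c - 1) + lam * c < 0
      nlinarith [mul_pos hr1 hr2, pow_pos (by linarith : (0:ℝ) < c + 1) 3,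
        mul_pos (mul_pos hr1 hr2) (by linarith : (0:ℝ) < c + 1)]
    have h2 : 0 < f lam 0 := by
      show 0 < (0:ℝ) ^ 3 + s * (0:ℝ) ^ 2 + (lam + r1 * r2) * 0 + lam * c
      have := mul_pos hlam0 hc
      nlinarith
    have hcont : ContinuousOn (f lam) (Set.Icc (-c - 1) 0) := by
      apply Continuous.continuousOn; fun_prop
    have hmem : (0:ℝ) ∈ Set.Icc (f lam (-c - 1)) (f lam 0) := ⟨h1.le, h2.le⟩
    obtain ⟨z, _, hz⟩ := intermediate_value_Icc (by linarith : -c - 1 ≤ (0:ℝ)) hcont hmem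
    exact ⟨z, hz⟩
  set ρ : ℝ → ℝ := fun lam => if h : ∃ z, f lam z = 0 then h.choose else 0 with hρdef
  have hρroot : ∀ lam : ℝ, Λ < lam → f lam (ρ lam) = 0 := by
    intro lam hl
    have h := hexists lam hl
    simp only [hρdef, dif_pos h]
    exact h.choose_spec
  refine ⟨Λ, ρ, ?_, ?_⟩
  · intro lam hl z
    constructor
    · intro hz
      exact (hmono lam (lt_trans hΛs hl)).injective (by
        show f lam z = f lam (ρ lam)
        rw [hρroot lam hl]; exact hz)
    · intro hz
      rw [hz]
      exact hρroot lam hl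
  · rw [Metric.tendsto_atTop]
    intro ε hε
    set G : ℝ := (c + ε) ^ 3 + s * (c + ε) ^ 2 + r1 * r2 * (c + ε) with hGdef
    refine ⟨max Λ (G / ε) + 1, ?_⟩
    intro lam hlamN
    have hl : Λ < lam := by
      have := le_max_left Λ (G / ε); linarith
    have hlG : G < lam * ε := by
      have h1 : G / ε < lam := by have := le_max_right Λ (G / ε); linarith
      calc G = G / ε * ε := by field_simp
        _ < lam * ε := by exact mul_lt_mul_of_pos_right h1 hε
    have hmo := hmono lam (lt_trans hΛs hl)
    have hroot := hρroot lam hl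
    have hhi : 0 < f lam (-c + ε) := by
      show 0 < (-c + ε) ^ 3 + s * (-c + ε) ^ 2 + (lam + r1 * r2) * (-c + ε) + lam * c
      have key : (-c + ε) ^ 3 + s * (-c + ε) ^ 2 + (lam + r1 * r2) * (-c + ε) + lam * c
          = lam * ε - G + (2 * ε ^ 3 + 6 * (ε * c ^ 2)
            + s * ((ε - c) ^ 2 + (c + ε) ^ 2) + 2 * (r1 * r2 * ε)) := by
        rw [hGdef]; ring
      have e1 : 0 ≤ s * ((ε - c) ^ 2 + (c + ε) ^ 2) := by positivity
      have e2 : 0 ≤ ε ^ 3 := by positivity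
      have e3 : 0 ≤ ε * c ^ 2 := by positivity
      have e4 : 0 ≤ r1 * r2 * ε := by positivity
      rw [key]; linarith
    have hlo : f lam (-c - ε) < 0 := by
      show (-c - ε) ^ 3 + s * (-c - ε) ^ 2 + (lam + r1 * r2) * (-c - ε) + lam * c < 0
      have key : (-c - ε) ^ 3 + s * (-c - ε) ^ 2 + (lam + r1 * r2) * (-c - ε) + lam * c
          = G - lam * ε - 2 * (c + ε) ^ 3 - 2 * (r1 * r2 * (c + ε)) := by
        rw [hGdef]; ring
      have e1 : 0 < (c + ε) ^ 3 := by positivity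
      have e2 : 0 < r1 * r2 * (c + ε) := by positivity
      rw [key]; linarith
    have h1 : -c - ε < ρ lam := by
      by_contra h
      push_neg at h
      have := hmo.monotone h
      rw [hroot] at this
      linarith
    have h2 : ρ lam < -c + ε := by
      by_contra h
      push_neg at h
      have := hmo.monotone h
      rw [hroot] at this
      linarith
    rw [Real.dist_eq, abs_lt]
    have hc2 : c = r1 + r2 - b1 - b2 := hcdef
    constructor <;> linarith
end

section
/- Let b_1, b_2, r_1, r_2 > 0 satisfy b_1/r_1 + b_2/r_2 = 1. For λ > 0 consider the cubic P_λ(z) = z³ + (r_1 + r_2) z² + (λ + r_1 r_2) z + λ (r_1 + r_2 − b_1 − b_2) as a polynomial over ℂ, and for each sufficiently large λ let z(λ) be a non-real complex root of P_λ with positive imaginary part. Then as λ → ∞: Re z(λ) → −(b_1 + b_2)/2 and Im z(λ)/√λ → 1. -/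
open Filter

set_option maxHeartbeats 1000000 in
private theorem burgers_aux_alg (b1 b2 r1 r2 lam : ℝ) (w : ℂ)
    (heq : w ^ 3 + ((r1 : ℂ) + r2) * w ^ 2 + ((lam : ℂ) + r1 * r2) * w +
          (lam : ℂ) * ((r1 : ℂ) + r2 - b1 - b2) = 0) (hb : 0 < w.im) :
    w.im ^ 2 = lam + (3 * w.re ^ 2 + 2 * (r1 + r2) * w.re + r1 * r2) ∧
    w.re * (2 * (2 * w.re + (r1 + r2)) ^ 2 + 2 * (r1 * r2) + 2 * lam)
      = -((r1 + r2) * (r1 * r2) + lam * (b1 + b2)) := by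
  have hre := congrArg Complex.re heq
  have him := congrArg Complex.im heq
  simp only [pow_succ, pow_zero, one_mul, Complex.mul_re, Complex.mul_im, Complex.add_re,
    Complex.add_im, Complex.sub_re, Complex.sub_im, Complex.ofReal_re, Complex.ofReal_im,
    Complex.zero_re, Complex.zero_im] at hre him
  set a := w.re; set b := w.im
  have h1 : b * (3 * a ^ 2 + 2 * (r1 + r2) * a + lam + r1 * r2 - b ^ 2) = 0 := by
    linear_combination him
  have h1' : b ^ 2 = lam + (3 * a ^ 2 + 2 * (r1 + r2) * a + r1 * r2) := by
    rcases mul_eq_zero.1 h1 with h | h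
    · exact absurd h (ne_of_gt hb)
    · linarith
  exact ⟨h1', by linear_combination -hre - (3*a+(r1+r2))*h1'⟩
set_option maxHeartbeats 1000000 in
private theorem burgers_aux_bounds (b1 b2 r1 r2 lam M C C2 a : ℝ)
    (hb1 : 0 < b1) (hb2 : 0 < b2) (hr1 : 0 < r1) (hr2 : 0 < r2)
    (hMdef : M = (b1+b2+1)/2)
    (hCdef : C = 8*M^3 + 8*(r1+r2)*M^2 + 2*(r1*r2 + (r1+r2)^2)*M + (r1+r2)*(r1*r2))
    (hC2def : C2 = 3*M^2 + 2*(r1+r2)*M + r1*r2)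
    (hlam1 : (1:ℝ) ≤ lam)
    (hspl : (r1+r2)*(r1*r2) ≤ lam)
    (hE2 : a * (2 * (2 * a + (r1+r2)) ^ 2 + 2 * (r1*r2) + 2 * lam)
        = -((r1+r2) * (r1*r2) + lam * (b1 + b2))) :
    |a + (b1+b2)/2| ≤ C/(2*lam) ∧ |3*a^2 + 2*(r1+r2)*a + r1*r2| ≤ C2 := by
  have hlam0 : (0:ℝ) < lam := lt_of_lt_of_le one_pos hlam1
  have hM : 0 < M := by rw [hMdef]; positivity
  have hsq : (0:ℝ) ≤ (2 * a + (r1+r2))^2 := sq_nonneg _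
  have hD : 2 * lam ≤ 2 * (2 * a + (r1+r2)) ^ 2 + 2 * (r1*r2) + 2 * lam := by nlinarith
  have hD0 : 0 < 2 * (2 * a + (r1+r2)) ^ 2 + 2 * (r1*r2) + 2 * lam := by nlinarith
  have hB : 0 < b1 + b2 := by linarith
  have hs : (0:ℝ) < r1 + r2 := by linarith
  have hrhs : 0 < (r1+r2) * (r1*r2) + lam * (b1 + b2) := by positivity
  have ha_neg : a < 0 := by
    by_contra h
    push_neg at h
    have h0 : 0 ≤ a * (2 * (2 * a + (r1+r2)) ^ 2 + 2 * (r1*r2) + 2 * lam) :=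
      mul_nonneg h (le_of_lt hD0)
    linarith
  have hMD : M * (2 * lam) ≤ M * (2 * (2 * a + (r1+r2)) ^ 2 + 2 * (r1*r2) + 2 * lam) :=
    mul_le_mul_of_nonneg_left hD (le_of_lt hM)
  have hMlam : (r1+r2) * (r1*r2) + lam * (b1 + b2) ≤ M * (2 * lam) := by
    rw [hMdef]; nlinarith
  have ha_lb : -M ≤ a := by
    by_contra h
    push_neg at h
    have := mul_lt_mul_of_pos_right h hD0
    linarith
  have ha_ub : a ≤ M := le_of_lt (lt_of_lt_of_le ha_neg (le_of_lt hM))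
  have hkey : 2 * lam * (a + (b1+b2)/2)
      = -(8*a^3 + 8*(r1+r2)*a^2 + 2*(r1*r2+(r1+r2)^2)*a + (r1+r2)*(r1*r2)) := by
    linear_combination hE2
  clear hE2 hMD hMlam hrhs hD hD0 hsq ha_neg
  have hMa1 : 0 ≤ M - a := by linarith
  have hMa2 : 0 ≤ M + a := by linarith
  have ha2 : a ^ 2 ≤ M ^ 2 := by nlinarith [mul_nonneg hMa1 hMa2]
  have hquad : 0 ≤ M^2 + M*a + a^2 := by nlinarith [sq_nonneg (2*a+M)]
  have hquad2 : 0 ≤ M^2 - M*a + a^2 := by nlinarith [sq_nonneg (2*a-M)]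
  have ha3u : a ^ 3 ≤ M ^ 3 := by nlinarith [mul_nonneg hMa1 hquad]
  have ha3l : -(M ^ 3) ≤ a ^ 3 := by nlinarith [mul_nonneg hMa2 hquad2]
  have hsp : (0:ℝ) ≤ (r1+r2)*(r1*r2) := by positivity
  have hq0 : (0:ℝ) ≤ r1*r2 + (r1+r2)^2 := by positivity
  have h2l0 : (0:ℝ) < 2*lam := by linarith
  constructor
  · have h2u : 8*(r1+r2)*a^2 ≤ 8*(r1+r2)*M^2 := by nlinarith
    have h3u : 2*(r1*r2+(r1+r2)^2)*a ≤ 2*(r1*r2+(r1+r2)^2)*M := by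
      nlinarith [mul_nonneg hq0 hMa1]
    have h2l : 0 ≤ 8*(r1+r2)*a^2 := by positivity
    have h2l' : 0 ≤ 8*(r1+r2)*M^2 := by positivity
    have h3l : -(2*(r1*r2+(r1+r2)^2)*M) ≤ 2*(r1*r2+(r1+r2)^2)*a := by
      nlinarith [mul_nonneg hq0 hMa2]
    have hnum_ub : 8*a^3 + 8*(r1+r2)*a^2 + 2*(r1*r2+(r1+r2)^2)*a + (r1+r2)*(r1*r2) ≤ C := by
      rw [hCdef]; linarith
    have hnum_lb : -C ≤ 8*a^3 + 8*(r1+r2)*a^2 + 2*(r1*r2+(r1+r2)^2)*a + (r1+r2)*(r1*r2) := by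
      rw [hCdef]; linarith
    rw [abs_le]
    constructor
    · have hstep : -C ≤ 2*lam*(a+(b1+b2)/2) := by rw [hkey]; linarith
      calc -(C/(2*lam)) = -C/(2*lam) := by ring
        _ ≤ a + (b1+b2)/2 := by rw [div_le_iff₀ h2l0]; linarith
    · rw [le_div_iff₀ h2l0]
      have hstep : 2*lam*(a+(b1+b2)/2) ≤ C := by rw [hkey]; linarith
      linarith
  · have h2u : 2*(r1+r2)*a ≤ 2*(r1+r2)*M := by nlinarith [mul_nonneg (le_of_lt hs) hMa1]
    have h2l : -(2*(r1+r2)*M) ≤ 2*(r1+r2)*a := by nlinarith [mul_nonneg (le_of_lt hs) hMa2]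
    have ha2' : (0:ℝ) ≤ a^2 := sq_nonneg a
    have hM2' : (0:ℝ) ≤ M^2 := sq_nonneg M
    rw [hC2def, abs_le]
    constructor
    · nlinarith
    · linarith

set_option maxHeartbeats 1000000 in
/-- For `b₁, b₂, r₁, r₂ > 0` with `b₁/r₁ + b₂/r₂ = 1`, if for each sufficiently large `λ`
the complex number `z(λ)` is a non-real root of
`P_λ(z) = z³ + (r₁+r₂)z² + (λ + r₁r₂)z + λ(r₁+r₂−b₁−b₂)` with positive imaginary part,
then `Re z(λ) → −(b₁+b₂)/2` and `Im z(λ)/√λ → 1` as `λ → ∞`. -/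
theorem burgers_cubic_complex_roots (b1 b2 r1 r2 : ℝ)
    (hb1 : 0 < b1) (hb2 : 0 < b2) (hr1 : 0 < r1) (hr2 : 0 < r2)
    (hsum : b1 / r1 + b2 / r2 = 1) (z : ℝ → ℂ)
    (hz : ∀ᶠ lam : ℝ in Filter.atTop,
      z lam ^ 3 + ((r1 : ℂ) + r2) * z lam ^ 2 + ((lam : ℂ) + r1 * r2) * z lam +
          (lam : ℂ) * ((r1 : ℂ) + r2 - b1 - b2) = 0 ∧ 0 < (z lam).im) :
    Filter.Tendsto (fun lam => (z lam).re) Filter.atTop (nhds (-(b1 + b2) / 2)) ∧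
      Filter.Tendsto (fun lam => (z lam).im / Real.sqrt lam) Filter.atTop (nhds 1) := by
  set M : ℝ := (b1 + b2 + 1) / 2 with hMdef
  set C : ℝ := 8*M^3 + 8*(r1+r2)*M^2 + 2*(r1*r2 + (r1+r2)^2)*M + (r1+r2)*(r1*r2) with hCdef
  set C2 : ℝ := 3*M^2 + 2*(r1+r2)*M + r1*r2 with hC2def
  clear_value M C C2
  have key : ∀ᶠ lam : ℝ in atTop,
      |(z lam).re + (b1+b2)/2| ≤ C/(2*lam) ∧
      |3*(z lam).re^2 + 2*(r1+r2)*(z lam).re + r1*r2| ≤ C2 ∧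
      (z lam).im ^ 2 = lam + (3*(z lam).re^2 + 2*(r1+r2)*(z lam).re + r1*r2) ∧
      0 < (z lam).im := by
    filter_upwards [hz, eventually_ge_atTop (max ((r1+r2)*(r1*r2)) 1)] with lam hzl hlam
    obtain ⟨heq, hb⟩ := hzl
    have hlam1 : (1:ℝ) ≤ lam := le_trans (le_max_right _ _) hlam
    have hspl : (r1+r2) * (r1*r2) ≤ lam := le_trans (le_max_left _ _) hlam
    obtain ⟨hE1, hE2⟩ := burgers_aux_alg b1 b2 r1 r2 lam (z lam) heq hb
    obtain ⟨hb1', hb2'⟩ := burgers_aux_bounds b1 b2 r1 r2 lam M C C2 (z lam).re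
      hb1 hb2 hr1 hr2 hMdef hCdef hC2def hlam1 hspl hE2
    exact ⟨hb1', hb2', hE1, hb⟩
  have hre0 : Tendsto (fun lam => (z lam).re + (b1+b2)/2) atTop (nhds 0) := by
    have hbd : ∀ᶠ lam : ℝ in atTop, ‖(z lam).re + (b1+b2)/2‖ ≤ C / (2*lam) := by
      filter_upwards [key] with lam hk
      simpa [Real.norm_eq_abs] using hk.1
    have h2 : Tendsto (fun lam : ℝ => 2 * lam) atTop atTop :=
      Tendsto.const_mul_atTop two_pos tendsto_id
    exact squeeze_zero_norm' hbd (Tendsto.div_atTop tendsto_const_nhds h2)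
  have hre : Tendsto (fun lam => (z lam).re) atTop (nhds (-(b1 + b2) / 2)) := by
    have h := hre0.sub_const ((b1+b2)/2)
    simp only [zero_sub, ← neg_div] at h
    exact h.congr (fun lam => by ring)
  refine ⟨hre, ?_⟩
  have hh0 : Tendsto (fun lam => (3*(z lam).re^2 + 2*(r1+r2)*(z lam).re + r1*r2) / lam)
      atTop (nhds 0) := by
    have hbd : ∀ᶠ lam : ℝ in atTop,
        ‖(3*(z lam).re^2 + 2*(r1+r2)*(z lam).re + r1*r2) / lam‖ ≤ C2 / lam := by
      filter_upwards [key, eventually_ge_atTop (1:ℝ)] with lam hk hl1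
      have hl0 : (0:ℝ) < lam := lt_of_lt_of_le one_pos hl1
      rw [Real.norm_eq_abs, abs_div, abs_of_pos hl0]
      exact div_le_div_of_nonneg_right hk.2.1 hl0.le |>.trans_eq rfl
    exact squeeze_zero_norm' hbd (Tendsto.div_atTop tendsto_const_nhds tendsto_id)
  have h1t : Tendsto (fun lam => 1 + (3*(z lam).re^2 + 2*(r1+r2)*(z lam).re + r1*r2) / lam)
      atTop (nhds 1) := by
    simpa using tendsto_const_nhds.add hh0
  have h2t : Tendsto
      (fun lam => Real.sqrt (1 + (3*(z lam).re^2 + 2*(r1+r2)*(z lam).re + r1*r2) / lam))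
      atTop (nhds 1) := by
    have := (Real.continuous_sqrt.tendsto 1).comp h1t
    simpa [Function.comp_def, Real.sqrt_one] using this
  refine h2t.congr' ?_
  filter_upwards [key, eventually_ge_atTop (1:ℝ)] with lam hk hl1
  have hl0 : (0:ℝ) < lam := lt_of_lt_of_le one_pos hl1
  obtain ⟨-, -, hE1, hb⟩ := hk
  have him_eq : (z lam).im
      = Real.sqrt (lam * (1 + (3*(z lam).re^2 + 2*(r1+r2)*(z lam).re + r1*r2) / lam)) := by
    have hx : lam * (1 + (3*(z lam).re^2 + 2*(r1+r2)*(z lam).re + r1*r2) / lam)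
        = (z lam).im ^ 2 := by
      field_simp
      linarith [hE1]
    rw [hx, Real.sqrt_sq (le_of_lt hb)]
  rw [him_eq, Real.sqrt_mul (le_of_lt hl0), mul_comm (Real.sqrt lam), mul_div_assoc,
    div_self (ne_of_gt (Real.sqrt_pos.2 hl0)), mul_one]
end
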